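/- arXiv:0802.2747 — 6 statements merged into one kernel-verified Lean document; each statement's English description precedes it below -/
import Mathlib

section
/- Any automorphism of a once-bordered fatgraph (a connected fatgraph with exactly one boundary cycle, all vertices at least trivalent except one univalent vertex) is the identity. -/
open Classical

/-- A fatgraph on a finite set `D` of oriented edges (darts): `rev` is the
fixed-point-free involution reversing the orientation of an edge, and `rot`
records the cyclic ordering of the oriented edges pointing to each vertex
(the vertices are the orbits of `rot`).  The graph is required to be
connected. -/
structure Fatgraph (D : Type) [Fintype D] [DecidableEq D] where
  rev : Equiv.Perm D
  rot : Equiv.Perm D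
  rev_invol : ∀ d, rev (rev d) = d
  rev_ne : ∀ d, rev d ≠ d
  conn : ∀ d d' : D, ∃ g ∈ Subgroup.closure ({rev, rot} : Set (Equiv.Perm D)), g d = d'

/-- A once-bordered fatgraph: the boundary-cycle permutation `rev * rot`
(sending an oriented edge `e` pointing to a vertex `v` to the next oriented
edge in the cyclic order at `v`, oriented away from `v`) acts transitively
(one boundary cycle), there is a unique univalent vertex, whose incident
dart is `tail`, and all other vertices have valence at least three. -/
structure BorderedFatgraph (D : Type) [Fintype D] [DecidableEq D] extends Fatgraph D where
  tail : D
  tail_fix : rot tail = tail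
  tail_uniq : ∀ d, rot d = d → d = tail
  val_ge_three : ∀ d, d ≠ tail → rot (rot d) ≠ d
  oneBoundary : ∀ d d' : D, ∃ n : ℕ, ((rev * rot) ^ n) d = d'

variable {D : Type} [Fintype D] [DecidableEq D]

/-- Two darts point to the same vertex iff they lie in the same `rot`-orbit. -/
def vertRel (rot : Equiv.Perm D) (a b : D) : Prop := ∃ n : ℤ, (rot ^ n) a = b

/-- The setoid of darts whose classes are the vertices of the fatgraph. -/
def vSetoid (rot : Equiv.Perm D) : Setoid D where
  r := vertRel rot
  iseqv := by
    constructor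
    · exact fun a => ⟨0, rfl⟩
    · rintro a b ⟨n, rfl⟩
      exact ⟨-n, by rw [← Equiv.Perm.mul_apply, ← zpow_add, neg_add_cancel, zpow_zero,
        Equiv.Perm.one_apply]⟩
    · rintro a b c ⟨n, rfl⟩ ⟨m, rfl⟩
      exact ⟨m + n, by rw [zpow_add, Equiv.Perm.mul_apply]⟩

/-- Number of vertices touched by a set `S` of darts. -/
noncomputable def vCount (rot : Equiv.Perm D) (S : Finset D) : ℕ :=
  (S.image (Quotient.mk (vSetoid rot))).card

/-- A set of darts, closed under reversal, forms a (sub)tree:  it is connected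
as a subgraph (darts can be joined by walking around vertices and across edges
of `S`), and the number of vertices it touches exceeds its number of edges by
one. -/
def IsSubgraphTree (rev rot : Equiv.Perm D) (S : Finset D) : Prop :=
  (∀ a ∈ S, rev a ∈ S) ∧
  (∀ a ∈ S, ∀ b ∈ S, Relation.ReflTransGen
      (fun x y => vertRel rot x y ∨ (x ∈ S ∧ y = rev x)) a b) ∧
  (S = ∅ ∨ vCount rot S = S.card / 2 + 1)

/-- A spanning tree: a subgraph tree touching every vertex. -/
def IsSpanningTree (rev rot : Equiv.Perm D) (S : Finset D) : Prop :=
  IsSubgraphTree rev rot S ∧ ∀ d : D, ∃ a ∈ S, vertRel rot a d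

/-- Position of a dart in the boundary traversal that starts at the univalent
vertex of the tail (i.e. with the tail oriented away from it, the dart `rev t`). -/
noncomputable def bPos (rev rot : Equiv.Perm D) (t d : D) : ℕ :=
  if h : ∃ n : ℕ, ((rev * rot) ^ n) (rev t) = d then Nat.find h else 0

/-- The greedy algorithm: traverse the boundary cycle starting at the tail and
add each edge encountered whenever the result is still a tree. -/
noncomputable def greedyTree (rev rot : Equiv.Perm D) (t : D) : Finset D :=
  (List.range (Fintype.card D)).foldl
    (fun S n =>
      let d := ((rev * rot) ^ n) (rev t)
      let S' := insert d (insert (rev d) S)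
      if IsSubgraphTree rev rot S' then S' else S) ∅

/-! An automorphism commutes with `rot`, so it fixes the tail, the only fixed point of `rot`.
It also commutes with the boundary permutation `rev * rot`, whose powers move the tail to every
dart because there is a single boundary cycle; hence it fixes every dart. -/

theorem Equiv.Perm.eq_one_of_commute_of_apply_eq_self {α : Type*} {φ σ : Equiv.Perm α}
    (hcomm : Commute φ σ) {a : α} (ha : φ a = a) (horbit : ∀ x, ∃ n : ℕ, (σ ^ n) a = x) :
    φ = 1 := by
  ext x
  obtain ⟨n, rfl⟩ := horbit x
  rw [Equiv.Perm.one_apply, ← Equiv.Perm.mul_apply, (hcomm.pow_right n).eq,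
    Equiv.Perm.mul_apply, ha]

theorem BorderedFatgraph.apply_tail_of_commute_rot {D : Type} [Fintype D] [DecidableEq D]
    (G : BorderedFatgraph D) {φ : Equiv.Perm D} (hrot : Commute φ G.rot) :
    φ G.tail = G.tail :=
  G.tail_uniq _ <| by
    rw [← Equiv.Perm.mul_apply, ← hrot.eq, Equiv.Perm.mul_apply, G.tail_fix]

/-- Any automorphism of a once-bordered fatgraph (a bijection of
the oriented edges commuting with edge reversal and with the cyclic orderings
at the vertices) is the identity. -/
theorem bordered_fatgraph_automorphism_trivial
    (D : Type) [Fintype D] [DecidableEq D] (G : BorderedFatgraph D)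
    (φ : Equiv.Perm D)
    (hrev : ∀ d, φ (G.rev d) = G.rev (φ d))
    (hrot : ∀ d, φ (G.rot d) = G.rot (φ d)) :
    φ = 1 := by
  have hφrev : Commute φ G.rev := Equiv.ext hrev
  have hφrot : Commute φ G.rot := Equiv.ext hrot
  exact Equiv.Perm.eq_one_of_commute_of_apply_eq_self (hφrev.mul_right hφrot)
    (G.apply_tail_of_commute_rot hφrot) (G.oneBoundary G.tail)
end

section
/- In a once-bordered fatgraph, traversal of the unique boundary cycle starting at the univalent vertex of the tail visits every oriented edge exactly once, i.e., each edge appears exactly once with each of its two orientations. -/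
open Classical

variable {D : Type} [Fintype D] [DecidableEq D]

theorem Equiv.Perm.surjective_fin_card_pow_apply {α : Type*} [Fintype α] (σ : Equiv.Perm α)
    {x : α} (hx : ∀ y, ∃ n : ℕ, (σ ^ n) x = y) :
    Function.Surjective (fun n : Fin (Fintype.card α) => (σ ^ (n : ℕ)) x) := by
  intro y
  obtain ⟨n, rfl⟩ := hx y
  have hperiod : 0 < Function.minimalPeriod σ x :=
    Function.minimalPeriod_pos_of_mem_periodicPts (σ.injective.mem_periodicPts x)
  refine ⟨⟨n % Function.minimalPeriod σ x,
    (Nat.mod_lt n hperiod).trans_le Function.minimalPeriod_le_card⟩, ?_⟩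
  simp only [← Equiv.Perm.iterate_eq_pow, Function.iterate_mod_minimalPeriod_eq]

/-- In a once-bordered fatgraph, the traversal of the unique
boundary cycle starting at the univalent vertex of the tail (so starting with
the tail oriented away from that vertex) visits every oriented edge exactly
once. -/
theorem boundary_traversal_visits_each_oriented_edge_once
    (D : Type) [Fintype D] [DecidableEq D] (G : BorderedFatgraph D) :
    Function.Bijective (fun n : Fin (Fintype.card D) =>
      ((G.rev * G.rot) ^ (n : ℕ)) (G.rev G.tail)) :=
  (Fintype.bijective_iff_surjective_and_card _).mpr
    ⟨(G.rev * G.rot).surjective_fin_card_pow_apply (G.oneBoundary _), Fintype.card_fin _⟩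
end

section
/- Let G be a once-bordered fatgraph with greedy spanning tree T_G, and let < denote the boundary-traversal order on oriented edges. Then an edge e of G belongs to T_G if and only if its preferred orientation e satisfies e ≤ x for all oriented edges x pointing to the same vertex as e (i.e., with v(x) = v(e)). -/
open Classical

variable {D : Type} [Fintype D] [DecidableEq D]

/-!
Walk along the boundary cycle from the univalent vertex. The reversal of the `n`-th dart always
points to a vertex visited before (that of dart `n - 1`, or the univalent vertex when `n = 0`).
Hence, by induction, after `n` steps the greedy set is a tree touching exactly the visited
vertices, and the `n`-th edge is added iff its dart points to a new vertex: it is then a pendant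
edge, while otherwise both its ends lie in the tree and the vertex count rules it out. So an edge
lies in `T_G` iff its first traversal reaches a new vertex, i.e. iff its preferred orientation
comes first among the darts at its vertex.
-/

section SubgraphTree

variable {α : Type} {rev rot : Equiv.Perm α} {S : Finset α} {d x : α}

theorem vertRel_refl (rot : Equiv.Perm α) (a : α) : vertRel rot a a :=
  Equiv.Perm.SameCycle.refl rot a

theorem vertRel.symm {a b : α} (h : vertRel rot a b) : vertRel rot b a :=
  Equiv.Perm.SameCycle.symm h

theorem vertRel.trans {a b c : α} (h : vertRel rot a b) (h' : vertRel rot b c) :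
    vertRel rot a c :=
  Equiv.Perm.SameCycle.trans h h'

def Touches (rot : Equiv.Perm α) (S : Finset α) (x : α) : Prop := ∃ a ∈ S, vertRel rot a x

def WalkStep (rev rot : Equiv.Perm α) (S : Finset α) (x y : α) : Prop :=
  vertRel rot x y ∨ (x ∈ S ∧ y = rev x)

theorem WalkStep.symm (hrev : Function.Involutive rev) (hcl : ∀ a ∈ S, rev a ∈ S) {y : α}
    (h : WalkStep rev rot S x y) : WalkStep rev rot S y x := by
  rcases h with h | ⟨hx, rfl⟩
  · exact Or.inl h.symm
  · exact Or.inr ⟨hcl x hx, (hrev x).symm⟩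

theorem isSubgraphTree_of_reach (hrev : Function.Involutive rev) (hcl : ∀ a ∈ S, rev a ∈ S)
    (c : α) (hreach : ∀ a ∈ S, Relation.ReflTransGen (WalkStep rev rot S) a c)
    (hcount : vCount rot S = S.card / 2 + 1) : IsSubgraphTree rev rot S := by
  have : Std.Symm (WalkStep rev rot S) := ⟨fun _ _ => WalkStep.symm hrev hcl⟩
  exact ⟨hcl, fun a ha b hb => (hreach a ha).trans (Std.Symm.symm _ _ (hreach b hb)),
    Or.inr hcount⟩

variable [DecidableEq α]

theorem touches_insert {y : α} :
    Touches rot (insert y S) x ↔ vertRel rot y x ∨ Touches rot S x := by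
  simp only [Touches, Finset.mem_insert, exists_eq_or_imp]

theorem vCount_insert_of_touches (h : Touches rot S x) :
    vCount rot (insert x S) = vCount rot S := by
  obtain ⟨a, ha, hax⟩ := h
  rw [vCount, Finset.image_insert,
    Finset.insert_eq_self.2 (Finset.mem_image.2 ⟨a, ha, Quotient.sound hax⟩), vCount]

theorem vCount_insert_of_not_touches (h : ¬ Touches rot S x) :
    vCount rot (insert x S) = vCount rot S + 1 := by
  rw [vCount, Finset.image_insert, Finset.card_insert_of_notMem, vCount]
  intro hx
  obtain ⟨a, ha, hax⟩ := Finset.mem_image.1 hx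
  exact h ⟨a, ha, Quotient.exact hax⟩

def addEdge (rev : Equiv.Perm α) (d : α) (S : Finset α) : Finset α :=
  insert d (insert (rev d) S)

theorem mem_addEdge {e : α} : e ∈ addEdge rev d S ↔ e = d ∨ e = rev d ∨ e ∈ S := by
  simp only [addEdge, Finset.mem_insert]

theorem touches_addEdge :
    Touches rot (addEdge rev d S) x ↔
      vertRel rot d x ∨ vertRel rot (rev d) x ∨ Touches rot S x := by
  rw [addEdge, touches_insert, touches_insert]

theorem addEdge_eq_self (hcl : ∀ a ∈ S, rev a ∈ S) (hd : d ∈ S) : addEdge rev d S = S := by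
  rw [addEdge, Finset.insert_eq_self.2 (hcl d hd), Finset.insert_eq_self.2 hd]

theorem addEdge_revClosed (hrev : Function.Involutive rev) (hcl : ∀ a ∈ S, rev a ∈ S) :
    ∀ a ∈ addEdge rev d S, rev a ∈ addEdge rev d S := by
  intro a ha
  rcases mem_addEdge.1 ha with rfl | rfl | ha
  · exact mem_addEdge.2 (Or.inr (Or.inl rfl))
  · exact mem_addEdge.2 (Or.inl (hrev d))
  · exact mem_addEdge.2 (Or.inr (Or.inr (hcl a ha)))

theorem card_addEdge (hrev : Function.Involutive rev) (hcl : ∀ a ∈ S, rev a ∈ S) (hd : d ∉ S)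
    (hdrev : rev d ≠ d) : (addEdge rev d S).card = S.card + 2 := by
  have hrd : rev d ∉ S := fun h => hd (hrev d ▸ hcl _ h)
  rw [addEdge, Finset.card_insert_of_notMem (by simp [hd, hdrev.symm]),
    Finset.card_insert_of_notMem hrd]

theorem reach_of_mem_addEdge (hrev : Function.Involutive rev) {a : α} (h : a = d ∨ a = rev d) :
    Relation.ReflTransGen (WalkStep rev rot (addEdge rev d S)) a d := by
  rcases h with rfl | rfl
  · exact .refl
  · exact .single (Or.inr ⟨mem_addEdge.2 (Or.inr (Or.inl rfl)), (hrev d).symm⟩)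

theorem isSubgraphTree_addEdge_empty (hrev : Function.Involutive rev)
    (hd : ¬ vertRel rot (rev d) d) : IsSubgraphTree rev rot (addEdge rev d ∅) := by
  have hdrev : rev d ≠ d := fun h => hd (by rw [h]; exact vertRel_refl rot d)
  have hcl : ∀ a ∈ (∅ : Finset α), rev a ∈ (∅ : Finset α) := by simp
  refine isSubgraphTree_of_reach hrev (addEdge_revClosed hrev hcl) d
    (fun a ha => reach_of_mem_addEdge hrev (by simpa using mem_addEdge.1 ha)) ?_
  have hcount : vCount rot (addEdge rev d ∅) = 2 := by
    rw [addEdge, vCount_insert_of_not_touches, vCount_insert_of_not_touches] <;>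
      simp [Touches, vCount, hd]
  rw [hcount, card_addEdge hrev hcl (Finset.notMem_empty d) hdrev, Finset.card_empty]

theorem isSubgraphTree_addEdge (hrev : Function.Involutive rev) (hS : IsSubgraphTree rev rot S)
    (hne : S.Nonempty) (hd : ¬ Touches rot S d) (hrd : Touches rot S (rev d)) :
    IsSubgraphTree rev rot (addEdge rev d S) := by
  obtain ⟨hcl, hconn, hcount⟩ := hS
  obtain ⟨c, hc, hcrd⟩ := hrd
  have hrdd : ¬ vertRel rot (rev d) d := fun h => hd ⟨c, hc, hcrd.trans h⟩
  have hdS : d ∉ S := fun h => hd ⟨d, h, vertRel_refl rot d⟩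
  have hdrev : rev d ≠ d := fun h => hrdd (by rw [h]; exact vertRel_refl rot d)
  refine isSubgraphTree_of_reach hrev (addEdge_revClosed hrev hcl) d (fun a ha => ?_) ?_
  · rcases mem_addEdge.1 ha with h | h | ha
    · exact reach_of_mem_addEdge hrev (Or.inl h)
    · exact reach_of_mem_addEdge hrev (Or.inr h)
    have hac : Relation.ReflTransGen (WalkStep rev rot (addEdge rev d S)) a c :=
      Relation.ReflTransGen.mono (fun _ _ h => Or.imp_right (fun ⟨hx, hy⟩ =>
        ⟨mem_addEdge.2 (Or.inr (Or.inr hx)), hy⟩) h) _ _ (hconn a ha c hc)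
    exact (hac.tail (Or.inl hcrd)).trans (reach_of_mem_addEdge hrev (Or.inr rfl))
  · have hvc : vCount rot (addEdge rev d S) = vCount rot S + 1 := by
      rw [addEdge, vCount_insert_of_not_touches (touches_insert.not.2 (not_or.2 ⟨hrdd, hd⟩)),
        vCount_insert_of_touches ⟨c, hc, hcrd⟩]
    rw [hvc, card_addEdge hrev hcl hdS hdrev, hcount.resolve_left hne.ne_empty]
    omega

theorem not_isSubgraphTree_addEdge (hrev : Function.Involutive rev)
    (hS : IsSubgraphTree rev rot S) (hne : S.Nonempty) (hdS : d ∉ S) (hdrev : rev d ≠ d)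
    (hd : Touches rot S d) (hrd : Touches rot S (rev d)) :
    ¬ IsSubgraphTree rev rot (addEdge rev d S) := by
  rintro ⟨-, -, hcount | hcount⟩
  · exact Finset.ne_empty_of_mem (mem_addEdge.2 (Or.inl rfl)) hcount
  rw [addEdge, vCount_insert_of_touches (touches_insert.2 (Or.inr hd)),
    vCount_insert_of_touches hrd, ← addEdge, card_addEdge hrev hS.1 hdS hdrev,
    hS.2.2.resolve_left hne.ne_empty] at hcount
  omega

noncomputable def greedyStep (rev rot : Equiv.Perm α) (d : α) (S : Finset α) : Finset α :=
  if IsSubgraphTree rev rot (addEdge rev d S) then addEdge rev d S else S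

theorem greedyStep_of_not_touches (hrev : Function.Involutive rev)
    (hS : IsSubgraphTree rev rot S) (hne : S.Nonempty) (hd : ¬ Touches rot S d)
    (hrd : Touches rot S (rev d)) : greedyStep rev rot d S = addEdge rev d S :=
  if_pos (isSubgraphTree_addEdge hrev hS hne hd hrd)

theorem greedyStep_of_touches (hrev : Function.Involutive rev) (hS : IsSubgraphTree rev rot S)
    (hne : S.Nonempty) (hdrev : rev d ≠ d) (hd : Touches rot S d)
    (hrd : Touches rot S (rev d)) : greedyStep rev rot d S = S := by
  by_cases hdS : d ∈ S
  · rw [greedyStep, addEdge_eq_self hS.1 hdS, ite_self]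
  · exact if_neg (not_isSubgraphTree_addEdge hrev hS hne hdS hdrev hd hrd)

end SubgraphTree

namespace BorderedFatgraph

variable (G : BorderedFatgraph D)

def boundaryWalk (n : ℕ) : D := ((G.rev * G.rot) ^ n) (G.rev G.tail)

theorem boundaryWalk_zero : G.boundaryWalk 0 = G.rev G.tail := rfl

theorem rev_boundaryWalk_succ (n : ℕ) :
    G.rev (G.boundaryWalk (n + 1)) = G.rot (G.boundaryWalk n) := by
  rw [boundaryWalk, pow_succ', Equiv.Perm.mul_apply, Equiv.Perm.mul_apply, G.rev_invol]
  rfl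

theorem exists_lt_card_boundaryWalk_eq (d : D) :
    ∃ n < Fintype.card D, G.boundaryWalk n = d := by
  have hsupp : G.rev G.tail ∈ (G.rev * G.rot).support := by
    rw [Equiv.Perm.mem_support, Equiv.Perm.mul_apply]
    intro h
    have hrot : G.rot (G.rev G.tail) = G.rot G.tail := by
      rw [G.tail_fix]
      simpa only [G.rev_invol] using congrArg G.rev h
    exact G.rev_ne _ (G.rot.injective hrot)
  obtain ⟨n, rfl⟩ := G.oneBoundary (G.rev G.tail) d
  obtain ⟨i, hi, hid⟩ := (Equiv.Perm.sameCycle_pow_right.2 (.refl _ _)).exists_pow_eq_of_mem_support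
    (y := G.boundaryWalk n) hsupp
  exact ⟨i, hi.trans_le (Finset.card_le_univ _), hid⟩

theorem boundaryWalk_bPos (d : D) : G.boundaryWalk (bPos G.rev G.rot G.tail d) = d := by
  have h := G.oneBoundary (G.rev G.tail) d
  rw [bPos, dif_pos h]
  exact Nat.find_spec h

variable {G} in
theorem bPos_le {n : ℕ} {d : D} (h : G.boundaryWalk n = d) : bPos G.rev G.rot G.tail d ≤ n := by
  rw [bPos, dif_pos ⟨n, h⟩]
  exact Nat.find_min' _ h

theorem bPos_lt_card (d : D) : bPos G.rev G.rot G.tail d < Fintype.card D := by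
  obtain ⟨n, hn, h⟩ := G.exists_lt_card_boundaryWalk_eq d
  exact (bPos_le h).trans_lt hn

theorem vertRel_tail_iff {x : D} : vertRel G.rot G.tail x ↔ x = G.tail :=
  ⟨fun h => (Equiv.Perm.SameCycle.eq_of_left h G.tail_fix).symm,
    fun h => h ▸ vertRel_refl _ _⟩

theorem ne_tail_of_bPos_le_bPos_rev {d : D}
    (h : bPos G.rev G.rot G.tail d ≤ bPos G.rev G.rot G.tail (G.rev d)) : d ≠ G.tail := by
  rintro rfl
  have h0 : bPos G.rev G.rot G.tail G.tail = 0 := Nat.le_zero.1 (h.trans (bPos_le rfl))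
  exact G.rev_ne G.tail (by rw [← G.boundaryWalk_zero, ← h0, boundaryWalk_bPos])

/-- The boundary walk has reached the vertex of `x` before step `n`; it starts at the univalent
vertex. -/
def Visited (n : ℕ) (x : D) : Prop :=
  vertRel G.rot G.tail x ∨ ∃ m < n, vertRel G.rot (G.boundaryWalk m) x

variable {G}

theorem Visited.mono {m n : ℕ} {x : D} (hmn : m ≤ n) (h : G.Visited m x) : G.Visited n x :=
  h.imp_right fun ⟨k, hk, hkx⟩ => ⟨k, hk.trans_le hmn, hkx⟩

theorem Visited.of_vertRel {n : ℕ} {x y : D} (h : G.Visited n x) (hxy : vertRel G.rot x y) :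
    G.Visited n y :=
  h.imp (·.trans hxy) fun ⟨k, hk, hkx⟩ => ⟨k, hk, hkx.trans hxy⟩

theorem visited_succ {n : ℕ} {x : D} :
    G.Visited (n + 1) x ↔ G.Visited n x ∨ vertRel G.rot (G.boundaryWalk n) x := by
  simp only [Visited, Nat.lt_succ_iff_lt_or_eq, or_and_right, exists_or, exists_eq_left, or_assoc]

variable (G)

theorem visited_rev_boundaryWalk (n : ℕ) : G.Visited n (G.rev (G.boundaryWalk n)) := by
  cases n with
  | zero => exact Or.inl (by rw [boundaryWalk_zero, G.rev_invol]; exact vertRel_refl _ _)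
  | succ n =>
    rw [rev_boundaryWalk_succ]
    exact visited_succ.2 (Or.inr ⟨1, by simp⟩)

theorem not_visited_zero_boundaryWalk_zero : ¬ G.Visited 0 (G.boundaryWalk 0) := by
  rintro (h | ⟨m, hm, -⟩)
  · exact G.rev_ne _ (G.vertRel_tail_iff.1 h)
  · exact absurd hm m.not_lt_zero

theorem not_visited_bPos_iff {d : D} (hd : d ≠ G.tail) :
    ¬ G.Visited (bPos G.rev G.rot G.tail d) d ↔
      ∀ x, vertRel G.rot x d → bPos G.rev G.rot G.tail d ≤ bPos G.rev G.rot G.tail x := by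
  simp only [Visited, G.vertRel_tail_iff, hd, false_or, not_exists, not_and]
  constructor
  · intro h x hx
    by_contra! hlt
    exact h _ hlt (by rwa [boundaryWalk_bPos])
  · intro h m hm hmd
    exact absurd ((h _ hmd).trans (bPos_le rfl)) (not_le.2 hm)

theorem bPos_boundaryWalk_of_not_visited {m : ℕ} (h : ¬ G.Visited m (G.boundaryWalk m)) :
    bPos G.rev G.rot G.tail (G.boundaryWalk m) = m := by
  refine (bPos_le rfl).antisymm (not_lt.1 fun hlt => h (Or.inr ⟨_, hlt, ?_⟩))
  rw [G.boundaryWalk_bPos]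
  exact vertRel_refl _ _

noncomputable def greedyPrefix (n : ℕ) : Finset D :=
  (List.range n).foldl (fun S m => greedyStep G.rev G.rot (G.boundaryWalk m) S) ∅

theorem greedyTree_eq_greedyPrefix :
    greedyTree G.rev G.rot G.tail = G.greedyPrefix (Fintype.card D) := rfl

theorem greedyPrefix_succ_eq_greedyStep (n : ℕ) :
    G.greedyPrefix (n + 1) = greedyStep G.rev G.rot (G.boundaryWalk n) (G.greedyPrefix n) := by
  rw [greedyPrefix, List.range_succ, List.foldl_append, List.foldl_cons, List.foldl_nil]
  rfl

theorem isSubgraphTree_addEdge_boundaryWalk_zero :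
    IsSubgraphTree G.rev G.rot (addEdge G.rev (G.boundaryWalk 0) ∅) :=
  isSubgraphTree_addEdge_empty G.rev_invol fun h =>
    G.not_visited_zero_boundaryWalk_zero ((G.visited_rev_boundaryWalk 0).of_vertRel h)

theorem greedyPrefix_one : G.greedyPrefix 1 = addEdge G.rev (G.boundaryWalk 0) ∅ :=
  (G.greedyPrefix_succ_eq_greedyStep 0).trans (if_pos G.isSubgraphTree_addEdge_boundaryWalk_zero)

variable {G} in
theorem greedyStep_boundaryWalk {n : ℕ} {S : Finset D} (hS : IsSubgraphTree G.rev G.rot S)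
    (hne : S.Nonempty) (htouch : ∀ x, Touches G.rot S x ↔ G.Visited n x) :
    greedyStep G.rev G.rot (G.boundaryWalk n) S =
      if G.Visited n (G.boundaryWalk n) then S else addEdge G.rev (G.boundaryWalk n) S := by
  have hrd := (htouch _).2 (G.visited_rev_boundaryWalk n)
  split_ifs with hv
  · exact greedyStep_of_touches G.rev_invol hS hne (G.rev_ne _) ((htouch _).2 hv) hrd
  · exact greedyStep_of_not_touches G.rev_invol hS hne (mt (htouch _).1 hv) hrd

theorem greedyPrefix_invariant {n : ℕ} (hn : 1 ≤ n) :
    IsSubgraphTree G.rev G.rot (G.greedyPrefix n) ∧ (G.greedyPrefix n).Nonempty ∧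
      ∀ x, Touches G.rot (G.greedyPrefix n) x ↔ G.Visited n x := by
  induction n, hn using Nat.le_induction with
  | base =>
    rw [greedyPrefix_one]
    refine ⟨G.isSubgraphTree_addEdge_boundaryWalk_zero, ⟨_, mem_addEdge.2 (Or.inl rfl)⟩,
      fun x => ?_⟩
    rw [touches_addEdge, visited_succ, boundaryWalk_zero, G.rev_invol]
    simp [Visited, Touches, or_comm]
  | succ n hn ih =>
    obtain ⟨hS, hne, htouch⟩ := ih
    rw [greedyPrefix_succ_eq_greedyStep, greedyStep_boundaryWalk hS hne htouch]
    split_ifs with hv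
    · refine ⟨hS, hne, fun x => (htouch x).trans ⟨(·.mono n.le_succ), fun h => ?_⟩⟩
      exact (visited_succ.1 h).elim id hv.of_vertRel
    · have hrd := G.visited_rev_boundaryWalk n
      refine ⟨isSubgraphTree_addEdge G.rev_invol hS hne (mt (htouch _).1 hv) ((htouch _).2 hrd),
        ⟨_, mem_addEdge.2 (Or.inl rfl)⟩, fun x => ?_⟩
      rw [touches_addEdge, htouch, visited_succ]
      constructor
      · rintro (h | h | h)
        exacts [Or.inr h, Or.inl (hrd.of_vertRel h), Or.inl h]
      · rintro (h | h)
        exacts [Or.inr (Or.inr h), Or.inl h]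

theorem greedyPrefix_succ (n : ℕ) :
    G.greedyPrefix (n + 1) = if G.Visited n (G.boundaryWalk n) then G.greedyPrefix n
      else addEdge G.rev (G.boundaryWalk n) (G.greedyPrefix n) := by
  rcases Nat.eq_zero_or_pos n with rfl | hn
  · rw [greedyPrefix_one, if_neg G.not_visited_zero_boundaryWalk_zero]
    rfl
  · obtain ⟨hS, hne, htouch⟩ := G.greedyPrefix_invariant hn
    rw [greedyPrefix_succ_eq_greedyStep, greedyStep_boundaryWalk hS hne htouch]

theorem mem_greedyPrefix_iff {n : ℕ} {e : D} :
    e ∈ G.greedyPrefix n ↔ ∃ m < n, ¬ G.Visited m (G.boundaryWalk m) ∧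
      (e = G.boundaryWalk m ∨ e = G.rev (G.boundaryWalk m)) := by
  induction n with
  | zero => simp [greedyPrefix]
  | succ n ih =>
    rw [G.greedyPrefix_succ, Nat.exists_lt_succ_right, ← ih]
    by_cases hv : G.Visited n (G.boundaryWalk n)
    · rw [if_pos hv]
      simp only [hv, not_true_eq_false, false_and, or_false]
    · rw [if_neg hv, mem_addEdge]
      simp only [hv, not_false_eq_true, true_and]
      tauto

end BorderedFatgraph

/-- An edge (given by a dart `d` in its preferred orientation,
i.e. appearing in the boundary traversal no later than its reversal) belongs
to the greedy spanning tree if and only if `d` is minimal, with respect to the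
boundary-traversal order, among all oriented edges pointing to the same
vertex. -/
theorem greedy_membership_iff_minimal_at_vertex
    (D : Type) [Fintype D] [DecidableEq D] (G : BorderedFatgraph D)
    (d : D)
    (hpref : bPos G.rev G.rot G.tail d ≤ bPos G.rev G.rot G.tail (G.rev d)) :
    d ∈ greedyTree G.rev G.rot G.tail ↔
      ∀ x : D, vertRel G.rot x d →
        bPos G.rev G.rot G.tail d ≤ bPos G.rev G.rot G.tail x := by
  set n := bPos G.rev G.rot G.tail d
  have hwalk : G.boundaryWalk n = d := G.boundaryWalk_bPos d
  have hlt : n < bPos G.rev G.rot G.tail (G.rev d) := hpref.lt_of_ne fun h =>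
    G.rev_ne d (by rw [← G.boundaryWalk_bPos (G.rev d), ← h, hwalk])
  rw [G.greedyTree_eq_greedyPrefix, G.mem_greedyPrefix_iff,
    ← G.not_visited_bPos_iff (G.ne_tail_of_bPos_le_bPos_rev hpref)]
  constructor
  · rintro ⟨m, -, hnew, rfl | hm⟩
    · rwa [G.bPos_boundaryWalk_of_not_visited hnew]
    · have hrev : G.boundaryWalk m = G.rev d := by rw [hm, G.rev_invol]
      rw [← hrev, G.bPos_boundaryWalk_of_not_visited hnew] at hlt
      have hvisited := (G.visited_rev_boundaryWalk n).mono hlt.le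
      rw [hwalk, ← hrev] at hvisited
      exact absurd hvisited hnew
  · intro hnew
    exact ⟨n, G.bPos_lt_card d, hwalk ▸ hnew, Or.inl hwalk.symm⟩
end

section
/- Let C be a linear chord diagram with k chords whose underlying fatgraph has one boundary cycle, and let X_C = {x_1, ..., x_k} be the π₁-markings of the chords with preferred orientations, for a geometric π₁-marking of C. Then the marking of the reversed tail t̄ equals the product of the chord-end labels read left to right along the core (each chord end contributing the marking of the chord oriented away from that end, or its inverse), and this word in the letters X_C is reduced. -/
/-!
Reading the vertex conditions along the core from right to left telescopes the marking of the
tail into the product of the chord-end labels. A cancellation between two consecutive letters of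
this word would mean a chord joining two adjacent endpoints; the gap between them would then be a
boundary cycle on its own, which a bordered diagram does not have.
-/

open Classical

/-- A linear chord diagram with `k` chords is encoded by the fixed-point-free
involution `μ` of `Fin (2*k)` matching the two endpoints of each chord, the
endpoints being attached to the core interval in left-to-right order.
`nextGap` is the step of the boundary traversal of the underlying fatgraph,
acting on the `2*k + 1` gaps between consecutive attachment points: from the
gap just left of endpoint `g` the traversal jumps along the chord at `g` and
lands in the gap just right of the opposite endpoint `μ g`; from the rightmost
gap it wraps around the core back to the leftmost (tail) gap. -/
def nextGap {k : ℕ} (μ : Equiv.Perm (Fin (2 * k))) (g : Fin (2 * k + 1)) :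
    Fin (2 * k + 1) :=
  if h : (g : ℕ) < 2 * k then Fin.succ (μ ⟨g, h⟩) else 0

/-- A matching is a bordered chord diagram when it is a fixed-point-free
involution whose gap traversal is a single cycle, i.e. the underlying fatgraph
has exactly one boundary cycle. -/
def IsBorderedMatching {k : ℕ} (μ : Equiv.Perm (Fin (2 * k))) : Prop :=
  (∀ p, μ (μ p) = p) ∧ (∀ p, μ p ≠ p) ∧
  ∀ g g' : Fin (2 * k + 1), ∃ n : ℕ, (nextGap μ)^[n] g = g'

/-- The reverse step of the boundary traversal on gaps. -/
def prevGap {k : ℕ} (μ : Equiv.Perm (Fin (2 * k))) (g : Fin (2 * k + 1)) :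
    Fin (2 * k + 1) :=
  if h : 0 < (g : ℕ) then
    Fin.castSucc (μ ⟨(g : ℕ) - 1, by have := g.isLt; omega⟩)
  else Fin.last (2 * k)

/-- Position of the oriented chord with source endpoint `p` in the order `<`
of first traversal along the boundary cycle starting at the tail.  (The
oriented chord with source `p` is traversed at the step leaving the gap just
right of `p`.) -/
noncomputable def chordPos {k : ℕ} (μ : Equiv.Perm (Fin (2 * k)))
    (p : Fin (2 * k)) : ℕ :=
  if h : ∃ n : ℕ, (prevGap μ)^[n] 0 = Fin.succ p then Nat.find h else 0

/-- `x` immediately precedes `y` among oriented chords in the boundary order. -/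
def immPrecBdry {k : ℕ} (μ : Equiv.Perm (Fin (2 * k))) (x y : Fin (2 * k)) : Prop :=
  chordPos μ x < chordPos μ y ∧
  ∀ z : Fin (2 * k), ¬ (chordPos μ x < chordPos μ z ∧ chordPos μ z < chordPos μ y)

theorem Fin.apply_zero_eq_prod_ofFn_mul_apply_last {G : Type*} [Monoid G] {n : ℕ}
    (f : Fin (n + 1) → G) (g : Fin n → G) (h : ∀ p, f p.castSucc = g p * f p.succ) :
    f 0 = (List.ofFn g).prod * f (Fin.last n) := by
  induction n with
  | zero => simp
  | succ n ih =>
    have htail := ih (f ∘ Fin.succ) (g ∘ Fin.succ) fun p => by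
      simpa only [Function.comp_apply, Fin.succ_castSucc] using h p.succ
    rw [← Fin.castSucc_zero, h 0, List.ofFn_succ, List.prod_cons, mul_assoc]
    exact congrArg (g 0 * ·) htail

theorem FreeGroup.prod_map_cond_of_eq_mk {α : Type*} (L : List (α × Bool)) :
    (L.map fun x => cond x.2 (of x.1) (of x.1)⁻¹).prod = mk L := by
  rw [← lift_mk, lift_of_apply]

theorem IsBorderedMatching.apply_succ_ne {k : ℕ} {μ : Equiv.Perm (Fin (2 * k))}
    (hB : IsBorderedMatching μ) {i : ℕ} (hi : i + 1 < 2 * k) :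
    μ ⟨i + 1, hi⟩ ≠ ⟨i, by omega⟩ := by
  intro hμ
  have hfixed : nextGap μ ⟨i + 1, by omega⟩ = ⟨i + 1, by omega⟩ := by
    simp [nextGap, hi, hμ]
  obtain ⟨n, hn⟩ := hB.2.2 ⟨i + 1, by omega⟩ 0
  rw [Function.iterate_fixed hfixed] at hn
  exact i.succ_ne_zero (congrArg Fin.val hn)

/-- `ch` identifies each endpoint with a chord and a sign, `m` is the resulting chord-end label,
`core` is the marking of the (rightward oriented) core segment in each gap, subject to the vertex
conditions, and the marking of the reversed tail is the marking `core 0` of the tail gap. -/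
theorem bordered_chord_diagram_boundary_word_reduced
    (k : ℕ) (μ : Equiv.Perm (Fin (2 * k)))
    (hB : IsBorderedMatching μ)
    (ch : Fin (2 * k) ≃ Fin k × Bool)
    (hch : ∀ p, ch (μ p) = ((ch p).1, !(ch p).2))
    (m : Fin (2 * k) → FreeGroup (Fin k))
    (hm : ∀ p, m p = if (ch p).2 then FreeGroup.of (ch p).1
                     else (FreeGroup.of (ch p).1)⁻¹)
    (core : Fin (2 * k + 1) → FreeGroup (Fin k))
    (hvertex : ∀ p : Fin (2 * k), core p.castSucc = m p * core p.succ)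
    (hend : core (Fin.last (2 * k)) = 1) :
    core 0 = (List.ofFn m).prod ∧
    (FreeGroup.toWord ((List.ofFn m).prod)).length = 2 * k := by
  have hword : (List.ofFn m).prod = FreeGroup.mk (List.ofFn ch) := by
    rw [← FreeGroup.prod_map_cond_of_eq_mk, List.map_ofFn]
    congr 2
    funext p
    simp [hm, Bool.cond_eq_ite]
  have hreduced : FreeGroup.IsReduced (List.ofFn ch) := by
    refine List.isChain_ofFn.2 fun i hi hchord => ?_
    by_contra hsign
    refine hB.apply_succ_ne hi (ch.injective ?_)
    rw [hch]
    exact Prod.ext hchord.symm (Bool.eq_not_of_ne hsign).symm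
  refine ⟨?_, ?_⟩
  · simpa [hend] using Fin.apply_zero_eq_prod_ofFn_mul_apply_last core m hvertex
  · rw [hword, FreeGroup.toWord_mk, hreduced.reduce_eq, List.length_ofFn]
end

section
/- Given a free generating set X of a free group F, there is at most one bordered linear chord diagram C (up to isomorphism) whose set of chord generators X_C equals X up to permutation and inverting any subset of the elements. -/
/-!
Every chord-end label is a letter `X j` or `(X j)⁻¹`, so a marked diagram spells its boundary
word `δ` as a word in the basis `X`. The two ends of a chord carry inverse letters and each
generator labels some chord, so the `2k` chord ends realise each of the `2k` letters exactly once.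
The spelled word is then reduced: a cancelling pair of neighbours would be the two ends of one
chord, and the gap between them would be a boundary cycle by itself. Since reduced spellings in
a free basis are unique, `δ` determines the labelling, and the labelling determines the chords,
which join the ends with mutually inverse labels.
-/

open Classical

namespace FreeGroup

variable {α : Type*}

theorem mk_singleton_injective : Function.Injective fun x : α × Bool => mk [x] :=
  fun x y h => by simpa [toWord_mk] using congrArg toWord h

theorem mk_singleton_flip (x : α × Bool) : mk [(x.1, !x.2)] = (mk [x])⁻¹ := by
  simp [inv_mk, invRev]

theorem IsReduced.eq_of_mk_eq [DecidableEq α] {L₁ L₂ : List (α × Bool)} (h₁ : IsReduced L₁)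
    (h₂ : IsReduced L₂) (h : mk L₁ = mk L₂) : L₁ = L₂ := by
  rw [← h₁.reduce_eq, ← h₂.reduce_eq, reduce.sound h]

end FreeGroup

namespace IsBorderedMatching

variable {k : ℕ} {μ : Equiv.Perm (Fin (2 * k))}

theorem eq_zero_of_nextGap_eq_self (h : IsBorderedMatching μ) {g : Fin (2 * k + 1)}
    (hg : nextGap μ g = g) : g = 0 := by
  obtain ⟨n, hn⟩ := h.2.2 g 0
  rwa [Function.iterate_fixed hg] at hn

theorem apply_ne_of_val_eq_succ (h : IsBorderedMatching μ) {p q : Fin (2 * k)}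
    (hpq : (q : ℕ) = p + 1) : μ p ≠ q := by
  intro hμ
  have hfix : nextGap μ q.castSucc = q.castSucc := by
    have hμq : μ q = p := by rw [← hμ, h.1]
    rw [nextGap, dif_pos (by simp)]
    simp only [Fin.val_castSucc, Fin.eta, hμq]
    exact Fin.ext (by simp [hpq])
  have := congrArg Fin.val (h.eq_zero_of_nextGap_eq_self hfix)
  simp [hpq] at this

theorem isReduced_ofFn {ι : Type*} {s : Fin (2 * k) → ι × Bool} (h : IsBorderedMatching μ)
    (hinj : Function.Injective s) (hflip : ∀ p, s (μ p) = ((s p).1, !(s p).2)) :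
    FreeGroup.IsReduced (List.ofFn s) := by
  refine List.isChain_ofFn.mpr fun i hi hfst => ?_
  by_contra hsnd
  refine h.apply_ne_of_val_eq_succ (p := ⟨i, by omega⟩) (q := ⟨i + 1, hi⟩) rfl (hinj ?_)
  rw [hflip]
  exact Prod.ext hfst (Bool.eq_not.mpr (Ne.symm hsnd)).symm

end IsBorderedMatching

section Spelling

open FreeGroup

/- Throughout, `s` spells the marking `m` in the basis `X`: `hs : ∀ p, m p = lift X (mk [s p])`. -/

variable {G ι E : Type*} [Group G] {X : ι → G}

theorem lift_mk_singleton_injective (hX : Function.Injective (lift X)) :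
    Function.Injective fun x : ι × Bool => lift X (mk [x]) :=
  hX.comp mk_singleton_injective

theorem lift_mk_ofFn_of_spelling {n : ℕ} {m : Fin n → G} {s : Fin n → ι × Bool}
    (hs : ∀ p, m p = lift X (mk [s p])) : lift X (mk (List.ofFn s)) = (List.ofFn m).prod := by
  rw [lift_mk, List.map_ofFn]
  congr 2
  funext p
  simp [hs p, lift_mk]

variable {μ : E → E} {m : E → G} {s : E → ι × Bool}

theorem spelling_apply_perm (hX : Function.Injective (lift X)) (hs : ∀ p, m p = lift X (mk [s p]))
    (hm : ∀ p, m (μ p) = (m p)⁻¹) (p : E) : s (μ p) = ((s p).1, !(s p).2) :=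
  lift_mk_singleton_injective hX <| by
    change lift X (mk [s (μ p)]) = lift X (mk [((s p).1, !(s p).2)])
    rw [mk_singleton_flip, _root_.map_inv, ← hs, ← hs, hm]

theorem spelling_surjective (hX : Function.Injective (lift X))
    (hs : ∀ p, m p = lift X (mk [s p])) (hflip : ∀ p, s (μ p) = ((s p).1, !(s p).2))
    (hsur : ∀ j, ∃ p, m p = X j ∨ m p = (X j)⁻¹) : Function.Surjective s := by
  have hletter : ∀ p x, m p = lift X (mk [x]) → s p = x := fun p x hpx =>
    lift_mk_singleton_injective hX ((hs p).symm.trans hpx)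
  rintro ⟨j, b⟩
  obtain ⟨p, hp | hp⟩ := hsur j
  · have hsp : s p = (j, true) := hletter p _ (by simp [hp])
    cases b
    · exact ⟨μ p, by simp [hflip, hsp]⟩
    · exact ⟨p, hsp⟩
  · have hsp : s p = (j, false) := hletter p _ (by simp [hp])
    cases b
    · exact ⟨p, hsp⟩
    · exact ⟨μ p, by simp [hflip, hsp]⟩

end Spelling

section BorderedSpelling

open FreeGroup

variable {G : Type*} [Group G] {k : ℕ} {X : Fin k → G} {μ : Equiv.Perm (Fin (2 * k))}
  {m : Fin (2 * k) → G}

theorem exists_reduced_spelling (hX : Function.Injective (lift X)) (h : IsBorderedMatching μ)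
    (hm : ∀ p, m (μ p) = (m p)⁻¹) (hval : ∀ p, ∃ j, m p = X j ∨ m p = (X j)⁻¹)
    (hsur : ∀ j, ∃ p, m p = X j ∨ m p = (X j)⁻¹) :
    ∃ s : Fin (2 * k) → Fin k × Bool, (∀ p, m p = lift X (mk [s p])) ∧
      (∀ p, s (μ p) = ((s p).1, !(s p).2)) ∧ Function.Injective s ∧ IsReduced (List.ofFn s) := by
  have hletter : ∀ p, ∃ x : Fin k × Bool, m p = lift X (mk [x]) := fun p => by
    obtain ⟨j, hj | hj⟩ := hval p
    exacts [⟨(j, true), by simp [hj]⟩, ⟨(j, false), by simp [hj]⟩]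
  choose s hs using hletter
  have hflip := spelling_apply_perm hX hs hm
  have hinj : Function.Injective s :=
    ((Fintype.bijective_iff_surjective_and_card s).mpr
      ⟨spelling_surjective hX hs hflip hsur, by simp [mul_comm]⟩).injective
  exact ⟨s, hs, hflip, hinj, h.isReduced_ofFn hinj hflip⟩

end BorderedSpelling

/-- Given a free generating set `X` of a free group `G` (and the
fixed boundary element `δ` of the geometricity condition), there is at most
one bordered linear chord diagram, with geometric marking, whose set of chord
generators equals `X` up to permutation and inverting any subset of the
elements: two such marked diagrams coincide. -/
theorem bordered_chord_diagram_unique_for_generating_set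
    (k : ℕ) (G : Type) [Group G] (X : Fin k → G)
    (hX : Function.Bijective (FreeGroup.lift X : FreeGroup (Fin k) →* G))
    (δ : G)
    (μ₁ μ₂ : Equiv.Perm (Fin (2 * k))) (m₁ m₂ : Fin (2 * k) → G)
    (h₁ : IsBorderedMatching μ₁) (h₂ : IsBorderedMatching μ₂)
    (hm₁ : ∀ p, m₁ (μ₁ p) = (m₁ p)⁻¹) (hm₂ : ∀ p, m₂ (μ₂ p) = (m₂ p)⁻¹)
    (hval₁ : ∀ p, ∃ j, m₁ p = X j ∨ m₁ p = (X j)⁻¹)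
    (hval₂ : ∀ p, ∃ j, m₂ p = X j ∨ m₂ p = (X j)⁻¹)
    (hsur₁ : ∀ j, ∃ p, m₁ p = X j ∨ m₁ p = (X j)⁻¹)
    (hsur₂ : ∀ j, ∃ p, m₂ p = X j ∨ m₂ p = (X j)⁻¹)
    (hδ₁ : (List.ofFn m₁).prod = δ) (hδ₂ : (List.ofFn m₂).prod = δ) :
    μ₁ = μ₂ ∧ m₁ = m₂ := by
  obtain ⟨s₁, hs₁, hflip₁, hinj₁, hred₁⟩ := exists_reduced_spelling hX.1 h₁ hm₁ hval₁ hsur₁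
  obtain ⟨s₂, hs₂, hflip₂, -, hred₂⟩ := exists_reduced_spelling hX.1 h₂ hm₂ hval₂ hsur₂
  have hs : s₁ = s₂ := List.ofFn_injective <| hred₁.eq_of_mk_eq hred₂ <| hX.1 <| by
    rw [lift_mk_ofFn_of_spelling hs₁, lift_mk_ofFn_of_spelling hs₂, hδ₁, hδ₂]
  refine ⟨Equiv.ext fun p => hinj₁ ?_, funext fun p => by rw [hs₁, hs₂, hs]⟩
  rw [hflip₁, hs, ← hflip₂]
end

section
/- The dual chord diagram Ĉ of a genus g bordered chord diagram C is again a genus g bordered chord diagram (i.e., its underlying fatgraph has exactly one boundary cycle and the same genus). -/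
open Classical

/-!
Read the boundary cycle backwards from the tail gap: `bdryGap μ v = (prevGap μ)^[v] 0`. As the
boundary is a single cycle through all `2k + 1` gaps, `bdryGap μ` is a bijection, and the rank
condition on `r` says `r p + 1 = chordPos μ p`, i.e. `bdryGap μ (r p).succ = p.succ`. Together
with `prevGap μ p.succ = (μ p).castSucc` this shows that `u ↦ bdryGap μ (u + 1)` conjugates the
gap traversal of the dual `r * μ * r⁻¹` to the cyclic decrement `u ↦ u - 1` of `Fin (2k + 1)`,
which is a single cycle.
-/

open Function

theorem minimalPeriod_eq_card_of_forall_exists_iterate_eq {α : Type*} [Finite α]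
    {f : α → α} (hf : Injective f) {a : α} (h : ∀ b, ∃ n, f^[n] a = b) :
    minimalPeriod f a = Nat.card α := by
  have hpos := minimalPeriod_pos_of_mem_periodicPts (hf.mem_periodicPts a)
  have hinj : Injective fun i : Fin (minimalPeriod f a) => f^[i] a := fun i j hij =>
    Fin.ext (iterate_injOn_Iio_minimalPeriod i.isLt j.isLt hij)
  have hsurj : Surjective fun i : Fin (minimalPeriod f a) => f^[i] a := fun b => by
    obtain ⟨n, rfl⟩ := h b
    exact ⟨⟨n % minimalPeriod f a, Nat.mod_lt _ hpos⟩, iterate_mod_minimalPeriod_eq⟩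
  exact le_antisymm (by simpa using Nat.card_le_card_of_injective _ hinj)
    (by simpa using Nat.card_le_card_of_surjective _ hsurj)

theorem eq_equiv_of_lt_iff_lt {α β : Type*} [LinearOrder α] [Finite α] (r : β ≃ α)
    {s : β → α} (h : ∀ p q, s p < s q ↔ r p < r q) : s = r := by
  have hmono : StrictMono (s ∘ r.symm) := fun x y hxy => by
    simpa only [comp_apply, h, Equiv.apply_symm_apply] using hxy
  funext p
  simpa using congrFun hmono.eq_id (r p)

theorem sub_one_iterate {R : Type*} [AddCommGroupWithOne R] (m : ℕ) (x : R) :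
    (· - 1)^[m] x = x - m := by
  induction m generalizing x with
  | zero => simp
  | succ m ih => rw [iterate_succ_apply, ih, Nat.cast_succ, sub_sub, add_comm]

open Fin.CommRing in
theorem exists_iterate_eq_of_semiconj_sub_one {α : Type*} {n : ℕ} {f : α → α}
    {ψ : α → Fin (n + 1)} (hψ : Injective ψ) (hf : Semiconj ψ f (· - 1)) (x y : α) :
    ∃ m, f^[m] x = y := by
  refine ⟨(ψ x - ψ y : Fin (n + 1)), hψ ?_⟩
  rw [(hf.iterate_right _).eq, sub_one_iterate, Fin.cast_val_eq_self, sub_sub_cancel]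

section ChordDiagram

variable {k : ℕ} {μ : Equiv.Perm (Fin (2 * k))}

@[simp]
theorem nextGap_castSucc (p : Fin (2 * k)) : nextGap μ p.castSucc = (μ p).succ := by
  simp [nextGap]

@[simp]
theorem nextGap_last : nextGap μ (Fin.last _) = 0 := by
  simp [nextGap]

@[simp]
theorem prevGap_succ (p : Fin (2 * k)) : prevGap μ p.succ = (μ p).castSucc := by
  simp [prevGap]

@[simp]
theorem prevGap_zero : prevGap μ 0 = Fin.last _ := by
  simp [prevGap]

theorem prevGap_leftInverse (hinv : ∀ p, μ (μ p) = p) :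
    LeftInverse (prevGap μ) (nextGap μ) := by
  intro x
  induction x using Fin.lastCases <;> simp [hinv]

theorem nextGap_leftInverse (hinv : ∀ p, μ (μ p) = p) :
    LeftInverse (nextGap μ) (prevGap μ) := by
  intro x
  induction x using Fin.cases <;> simp [hinv]

def bdryGap (μ : Equiv.Perm (Fin (2 * k))) (v : Fin (2 * k + 1)) : Fin (2 * k + 1) :=
  (prevGap μ)^[v] 0

theorem minimalPeriod_prevGap_zero (hinv : ∀ p, μ (μ p) = p)
    (hone : ∀ g g' : Fin (2 * k + 1), ∃ n : ℕ, (nextGap μ)^[n] g = g') :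
    minimalPeriod (prevGap μ) 0 = 2 * k + 1 := by
  rw [minimalPeriod_eq_card_of_forall_exists_iterate_eq (nextGap_leftInverse hinv).injective,
    Nat.card_eq_fintype_card, Fintype.card_fin]
  intro b
  obtain ⟨n, hn⟩ := hone b 0
  exact ⟨n, hn ▸ (prevGap_leftInverse hinv).iterate n b⟩

theorem bdryGap_bijective (hinv : ∀ p, μ (μ p) = p)
    (hone : ∀ g g' : Fin (2 * k + 1), ∃ n : ℕ, (nextGap μ)^[n] g = g') :
    Bijective (bdryGap μ) := by
  have hper := minimalPeriod_prevGap_zero hinv hone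
  refine Finite.injective_iff_bijective.mp fun v w h => Fin.ext ?_
  exact iterate_injOn_Iio_minimalPeriod (by rw [Set.mem_Iio, hper]; exact v.isLt)
    (by rw [Set.mem_Iio, hper]; exact w.isLt) h

theorem prevGap_bdryGap (hinv : ∀ p, μ (μ p) = p)
    (hone : ∀ g g' : Fin (2 * k + 1), ∃ n : ℕ, (nextGap μ)^[n] g = g')
    (v : Fin (2 * k + 1)) : prevGap μ (bdryGap μ v) = bdryGap μ (v + 1) := by
  have hval : ((v + 1 : Fin (2 * k + 1)) : ℕ) = (v + 1) % minimalPeriod (prevGap μ) 0 := by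
    rw [minimalPeriod_prevGap_zero hinv hone]
    simp [Fin.val_add, Nat.add_mod]
  rw [bdryGap, bdryGap, hval, iterate_mod_minimalPeriod_eq, iterate_succ_apply']

theorem exists_prevGap_iterate_eq_succ (hinv : ∀ p, μ (μ p) = p)
    (hone : ∀ g g' : Fin (2 * k + 1), ∃ n : ℕ, (nextGap μ)^[n] g = g') (p : Fin (2 * k)) :
    ∃ v : Fin (2 * k + 1), (prevGap μ)^[v] 0 = p.succ :=
  (bdryGap_bijective hinv hone).2 p.succ

theorem prevGap_iterate_chordPos (hinv : ∀ p, μ (μ p) = p)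
    (hone : ∀ g g' : Fin (2 * k + 1), ∃ n : ℕ, (nextGap μ)^[n] g = g') (p : Fin (2 * k)) :
    (prevGap μ)^[chordPos μ p] 0 = p.succ := by
  obtain ⟨v, hv⟩ := exists_prevGap_iterate_eq_succ hinv hone p
  have h : ∃ n, (prevGap μ)^[n] 0 = p.succ := ⟨v, hv⟩
  rw [chordPos, dif_pos h]
  exact Nat.find_spec h

theorem chordPos_lt (hinv : ∀ p, μ (μ p) = p)
    (hone : ∀ g g' : Fin (2 * k + 1), ∃ n : ℕ, (nextGap μ)^[n] g = g') (p : Fin (2 * k)) :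
    chordPos μ p < 2 * k + 1 := by
  obtain ⟨v, hv⟩ := exists_prevGap_iterate_eq_succ hinv hone p
  rw [chordPos, dif_pos ⟨v, hv⟩]
  exact (Nat.find_min' _ hv).trans_lt v.isLt

theorem chordPos_pos (hinv : ∀ p, μ (μ p) = p)
    (hone : ∀ g g' : Fin (2 * k + 1), ∃ n : ℕ, (nextGap μ)^[n] g = g') (p : Fin (2 * k)) :
    0 < chordPos μ p := by
  refine Nat.pos_of_ne_zero fun h => Fin.succ_ne_zero p ?_
  rw [← prevGap_iterate_chordPos hinv hone p, h, iterate_zero_apply]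

theorem val_apply_eq_chordPos_sub_one (hinv : ∀ p, μ (μ p) = p)
    (hone : ∀ g g' : Fin (2 * k + 1), ∃ n : ℕ, (nextGap μ)^[n] g = g')
    (r : Equiv.Perm (Fin (2 * k)))
    (hr : ∀ p q, chordPos μ p < chordPos μ q ↔ (r p : ℕ) < (r q : ℕ)) (p : Fin (2 * k)) :
    (r p : ℕ) = chordPos μ p - 1 := by
  have hlt q : chordPos μ q - 1 < 2 * k := by
    have := chordPos_lt hinv hone q
    have := q.isLt
    omega
  have hs := eq_equiv_of_lt_iff_lt r (s := fun q => ⟨chordPos μ q - 1, hlt q⟩) fun p q => by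
    have := chordPos_pos hinv hone p
    have := chordPos_pos hinv hone q
    rw [Fin.mk_lt_mk, Fin.lt_def, ← hr]
    omega
  exact (congrArg Fin.val (congrFun hs p)).symm

theorem bdryGap_succ_apply_eq_succ (hinv : ∀ p, μ (μ p) = p)
    (hone : ∀ g g' : Fin (2 * k + 1), ∃ n : ℕ, (nextGap μ)^[n] g = g')
    (r : Equiv.Perm (Fin (2 * k)))
    (hr : ∀ p q, chordPos μ p < chordPos μ q ↔ (r p : ℕ) < (r q : ℕ)) (p : Fin (2 * k)) :
    bdryGap μ (r p).succ = p.succ := by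
  rw [bdryGap, Fin.val_succ, val_apply_eq_chordPos_sub_one hinv hone r hr,
    Nat.sub_add_cancel (chordPos_pos hinv hone p), prevGap_iterate_chordPos hinv hone]

theorem semiconj_bdryGap_nextGap_conj (hinv : ∀ p, μ (μ p) = p)
    (hone : ∀ g g' : Fin (2 * k + 1), ∃ n : ℕ, (nextGap μ)^[n] g = g')
    (r : Equiv.Perm (Fin (2 * k)))
    (hr : ∀ p q, chordPos μ p < chordPos μ q ↔ (r p : ℕ) < (r q : ℕ)) :
    Semiconj (fun u => bdryGap μ (u + 1)) (nextGap (r * μ * r⁻¹)) (· - 1) := by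
  intro u
  induction u using Fin.lastCases with
  | last =>
    show bdryGap μ (nextGap _ (Fin.last _) + 1) = bdryGap μ (Fin.last _ + 1) - 1
    have hzero : bdryGap μ 0 = 0 := rfl
    rw [nextGap_last, Fin.last_add_one, ← prevGap_bdryGap hinv hone, hzero, prevGap_zero]
    ext
    rw [Fin.coe_sub_one, if_pos rfl, Fin.val_last]
  | cast x =>
    obtain ⟨p, rfl⟩ := r.surjective x
    show bdryGap μ (nextGap _ (r p).castSucc + 1) = bdryGap μ ((r p).castSucc + 1) - 1
    simp only [nextGap_castSucc, Equiv.Perm.mul_apply, Equiv.Perm.coe_inv,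
      Equiv.symm_apply_apply, Fin.coeSucc_eq_succ]
    rw [← prevGap_bdryGap hinv hone, bdryGap_succ_apply_eq_succ hinv hone r hr,
      bdryGap_succ_apply_eq_succ hinv hone r hr, prevGap_succ, hinv]
    ext
    rw [Fin.coe_sub_one, if_neg (Fin.succ_ne_zero p)]
    simp

theorem exists_nextGap_conj_iterate_eq (hinv : ∀ p, μ (μ p) = p)
    (hone : ∀ g g' : Fin (2 * k + 1), ∃ n : ℕ, (nextGap μ)^[n] g = g')
    (r : Equiv.Perm (Fin (2 * k)))
    (hr : ∀ p q, chordPos μ p < chordPos μ q ↔ (r p : ℕ) < (r q : ℕ)) (g g' : Fin (2 * k + 1)) :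
    ∃ n : ℕ, (nextGap (r * μ * r⁻¹))^[n] g = g' :=
  exists_iterate_eq_of_semiconj_sub_one
    ((bdryGap_bijective hinv hone).injective.comp (add_left_injective 1))
    (semiconj_bdryGap_nextGap_conj hinv hone r hr) g g'

end ChordDiagram

/-- The dual chord diagram (obtained by rearranging the chords
along the core according to the boundary-traversal order, i.e. conjugating the
matching by the rank permutation `r` of the boundary order) of a genus `g`
bordered chord diagram (one with `2*g` chords and one boundary cycle) is again
a genus `g` bordered chord diagram: it has the same number `2*g` of chords and
its underlying fatgraph again has exactly one boundary cycle. -/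
theorem dual_of_bordered_is_bordered
    (g : ℕ) (μ : Equiv.Perm (Fin (2 * (2 * g))))
    (hB : IsBorderedMatching μ)
    (r : Equiv.Perm (Fin (2 * (2 * g))))
    (hr : ∀ p q, chordPos μ p < chordPos μ q ↔ (r p : ℕ) < (r q : ℕ)) :
    IsBorderedMatching (r * μ * r⁻¹) := by
  obtain ⟨hinv, hfree, hone⟩ := hB
  refine ⟨fun p => by simp [hinv], fun p h => hfree (r⁻¹ p) ?_,
    exists_nextGap_conj_iterate_eq hinv hone r hr⟩
  simpa using congrArg r.symm h
end
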